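/- Let s(ξ₀, ξ₁, ξ₂, x₁, x₂) = ξ₀³ + ξ₁³(x₁ − 1) + ξ₂³(x₂ − 2). Then for every (ξ, x) = (ξ₀, ξ₁, ξ₂, x₁, x₂) with (ξ₀, ξ₁, ξ₂) ≠ (0,0,0) and s(ξ, x) = 0, the gradient ∇s(ξ, x) = (∂s/∂ξ₀, ∂s/∂ξ₁, ∂s/∂ξ₂, ∂s/∂x₁, ∂s/∂x₂) ∈ ℂ⁵ is not a complex scalar multiple of the Euler vector (ξ₀, ξ₁, ξ₂, 0, 0). -/

import Mathlib

/-- Example C: `s(ξ₀,ξ₁,ξ₂,x₁,x₂) = ξ₀³ + ξ₁³(x₁−1) + ξ₂³(x₂−2)`. -/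
noncomputable def exC_s (ξ₀ ξ₁ ξ₂ x₁ x₂ : ℂ) : ℂ :=
  ξ₀ ^ 3 + ξ₁ ^ 3 * (x₁ - 1) + ξ₂ ^ 3 * (x₂ - 2)

/-- The gradient `(∂s/∂ξ₀, ∂s/∂ξ₁, ∂s/∂ξ₂, ∂s/∂x₁, ∂s/∂x₂) ∈ ℂ⁵`. -/
noncomputable def exC_grad (ξ₀ ξ₁ ξ₂ x₁ x₂ : ℂ) : Fin 5 → ℂ :=
  ![deriv (fun t => exC_s t ξ₁ ξ₂ x₁ x₂) ξ₀,
    deriv (fun t => exC_s ξ₀ t ξ₂ x₁ x₂) ξ₁,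
    deriv (fun t => exC_s ξ₀ ξ₁ t x₁ x₂) ξ₂,
    deriv (fun t => exC_s ξ₀ ξ₁ ξ₂ t x₂) x₁,
    deriv (fun t => exC_s ξ₀ ξ₁ ξ₂ x₁ t) x₂]

/-! The `x`-components of `∇s` are `ξ₁³` and `ξ₂³`, whereas those of the Euler vector vanish.
Proportionality therefore forces `ξ₁ = ξ₂ = 0`, and then `s = ξ₀³ = 0` gives `ξ₀ = 0`. -/

lemma exC_grad_three (ξ₀ ξ₁ ξ₂ x₁ x₂ : ℂ) : exC_grad ξ₀ ξ₁ ξ₂ x₁ x₂ 3 = ξ₁ ^ 3 := by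
  have h : HasDerivAt (fun t => exC_s ξ₀ ξ₁ ξ₂ t x₂) (ξ₁ ^ 3 * 1) x₁ :=
    (((hasDerivAt_id x₁).sub_const 1).const_mul (ξ₁ ^ 3)).const_add (ξ₀ ^ 3) |>.add_const _
  simpa [exC_grad] using h.deriv

lemma exC_grad_four (ξ₀ ξ₁ ξ₂ x₁ x₂ : ℂ) : exC_grad ξ₀ ξ₁ ξ₂ x₁ x₂ 4 = ξ₂ ^ 3 := by
  have h : HasDerivAt (fun t => exC_s ξ₀ ξ₁ ξ₂ x₁ t) (ξ₂ ^ 3 * 1) x₂ :=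
    (((hasDerivAt_id x₂).sub_const 2).const_mul (ξ₂ ^ 3)).const_add _
  simpa [exC_grad] using h.deriv

lemma exC_s_zero_zero (ξ₀ x₁ x₂ : ℂ) : exC_s ξ₀ 0 0 x₁ x₂ = ξ₀ ^ 3 := by
  simp [exC_s]

/-- At every zero of `s` with `(ξ₀,ξ₁,ξ₂) ≠ 0`, the gradient of `s` is not a complex scalar
multiple of the Euler vector `(ξ₀,ξ₁,ξ₂,0,0)` (smoothness of `S` in Example C). -/
theorem exampleC_S_smooth (ξ₀ ξ₁ ξ₂ x₁ x₂ : ℂ) (hξ : (ξ₀, ξ₁, ξ₂) ≠ (0, 0, 0))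
    (hs : exC_s ξ₀ ξ₁ ξ₂ x₁ x₂ = 0) :
    ∀ c : ℂ, exC_grad ξ₀ ξ₁ ξ₂ x₁ x₂ ≠ c • ![ξ₀, ξ₁, ξ₂, 0, 0] := by
  intro c h
  have h₁ : ξ₁ = 0 := by simpa [exC_grad_three] using congrFun h 3
  have h₂ : ξ₂ = 0 := by simpa [exC_grad_four] using congrFun h 4
  subst h₁ h₂
  have h₀ : ξ₀ = 0 := pow_eq_zero_iff three_ne_zero |>.mp (exC_s_zero_zero ξ₀ x₁ x₂ ▸ hs)
  exact hξ (by rw [h₀])
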